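/- Let n = 2k+3 and G = K_n with a fixed cycle C of length n−2 and remaining vertices s,t. Let Q = δ(s) be the set of n−1 edges incident to s. Then every edge of G is Q-expressible with respect to the C-induced constraint: starting from E_Q = Q and repeatedly adding any edge e for which some odd cycle tight for the C-induced constraint contains e and has all its other edges already in E_Q, the procedure terminates with E_Q = E. -/

import Mathlib

open SimpleGraph

def ellLen (k a b : ℕ) : ℕ :=
  if (max a b - min a b) % 2 = 1 then max a b - min a b
  else 2 * k + 1 - (max a b - min a b)

def cCoeffFun (k a b : ℕ) : ℕ :=
  if a = b then 0
  else if max a b < 2 * k + 1 then ellLen k a b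
  else if min a b < 2 * k + 1 then k
  else 1

/-- Coefficients of the `C`-induced constraint on `K_{2k+3}` (cycle vertices `0,…,2k`,
`s = 2k+1`, `t = 2k+2`), as a function on unordered edges. -/
def cCoeff (k : ℕ) : Sym2 (Fin (2 * k + 3)) → ℕ :=
  Sym2.lift ⟨fun a b => cCoeffFun k a.val b.val, fun a b => by
    simp only [cCoeffFun, ellLen, Nat.max_comm, Nat.min_comm, eq_comm]⟩

/-- `Q`-expressibility closure: starting from `E_Q = Q`, an element `e` may be added
whenever some tight set `D` contains `e` and all other elements of `D` are already in
the closure. -/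
inductive Expressible {α : Type*} (tight : Set (Finset α)) (Q : Set α) : α → Prop
  | base {e : α} : e ∈ Q → Expressible tight Q e
  | step (D : Finset α) (e : α) : D ∈ tight → e ∈ D →
      (∀ f ∈ D, f ≠ e → Expressible tight Q f) → Expressible tight Q e

/-!
Edges at `s` form `Q`. A cycle edge `vᵢvᵢ₊₁` lies in the tight triangle `s vᵢ vᵢ₊₁`
(weight `k + k + 1`), and then an edge `tv` lies in the tight triangle `s v t`
(weight `k + 1 + k`). A chord of `C` splits `C` into two arcs, exactly one of even
length `m`; the chord together with that arc is an odd cycle, tight because the chord's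
coefficient is the length `2k + 1 - m` of the other, odd arc and each cycle edge has
coefficient `1`.
-/

namespace SimpleGraph

variable {V : Type*}

def topWalkOfSeq (f : ℕ → V) (hf : ∀ i, f i ≠ f (i + 1)) :
    (m : ℕ) → (⊤ : SimpleGraph V).Walk (f 0) (f m)
  | 0 => .nil
  | m + 1 => (topWalkOfSeq f hf m).concat ((top_adj _ _).2 (hf m))

section topWalkOfSeq

variable (f : ℕ → V) (hf : ∀ i, f i ≠ f (i + 1)) (m : ℕ)

lemma edges_topWalkOfSeq :
    (topWalkOfSeq f hf m).edges = (List.range m).map fun i ↦ s(f i, f (i + 1)) := by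
  induction m with
  | zero => rfl
  | succ m ih => simp [topWalkOfSeq, Walk.edges_concat, ih, List.range_succ]

lemma support_topWalkOfSeq : (topWalkOfSeq f hf m).support = (List.range (m + 1)).map f := by
  induction m with
  | zero => rfl
  | succ m ih => simp [topWalkOfSeq, Walk.support_concat, ih, List.range_succ (n := m + 1)]

lemma length_topWalkOfSeq : (topWalkOfSeq f hf m).length = m := by
  simp [← Walk.length_edges, edges_topWalkOfSeq]

variable {f m}

lemma isPath_topWalkOfSeq (hinj : Set.InjOn f (Set.Iic m)) : (topWalkOfSeq f hf m).IsPath := by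
  refine Walk.IsPath.mk' ?_
  rw [support_topWalkOfSeq]
  exact List.nodup_range.map_on fun i hi j hj ↦
    hinj (by simpa [Nat.lt_succ_iff] using hi) (by simpa [Nat.lt_succ_iff] using hj)

lemma isCycle_cons_topWalkOfSeq (hm : 2 ≤ m) (hinj : Set.InjOn f (Set.Iic m))
    (h : (⊤ : SimpleGraph V).Adj (f m) (f 0)) : (Walk.cons h (topWalkOfSeq f hf m)).IsCycle := by
  refine (Walk.cons_isCycle_iff _ h).2 ⟨isPath_topWalkOfSeq hf hinj, ?_⟩
  simp only [edges_topWalkOfSeq, List.mem_map, List.mem_range, not_exists, not_and]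
  intro i hi hedge
  rcases Sym2.eq_iff.1 hedge with ⟨him, -⟩ | ⟨hi0, him⟩
  · exact absurd (hinj (Set.mem_Iic.2 hi.le) (Set.mem_Iic.2 le_rfl) him) (by omega)
  · have := hinj (Set.mem_Iic.2 hi.le) (Set.mem_Iic.2 (Nat.zero_le _)) hi0
    have := hinj (Set.mem_Iic.2 hi) (Set.mem_Iic.2 le_rfl) him
    omega

end topWalkOfSeq

lemma isCycle_triangle {G : SimpleGraph V} {x y z : V} (hxy : G.Adj x y) (hyz : G.Adj y z)
    (hzx : G.Adj z x) : (Walk.cons hxy (.cons hyz (.cons hzx .nil))).IsCycle := by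
  rw [Walk.isCycle_def]
  have := hxy.ne; have := hyz.ne; have := hzx.ne
  aesop

end SimpleGraph

namespace CInducedConstraint

open SimpleGraph

variable {k : ℕ}

def s (k : ℕ) : Fin (2 * k + 3) := ⟨2 * k + 1, Nat.add_lt_add_left (by decide) _⟩

def t (k : ℕ) : Fin (2 * k + 3) := ⟨2 * k + 2, by omega⟩

def cyc (k i : ℕ) : Fin (2 * k + 3) :=
  ⟨i % (2 * k + 1), (Nat.mod_lt i (by omega)).trans (by omega)⟩

lemma val_lt_or_eq_s_or_eq_t (v : Fin (2 * k + 3)) : v.val < 2 * k + 1 ∨ v = s k ∨ v = t k := by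
  simp only [Fin.ext_iff, s, t]
  omega

lemma cyc_val (k i : ℕ) : (cyc k i).val = i % (2 * k + 1) := rfl

lemma cyc_val_lt (k i : ℕ) : (cyc k i).val < 2 * k + 1 := Nat.mod_lt i (by omega)

lemma cyc_val_of_lt {w : Fin (2 * k + 3)} (hw : w.val < 2 * k + 1) : cyc k w.val = w :=
  Fin.ext (Nat.mod_eq_of_lt hw)

lemma cyc_add_period (k a : ℕ) : cyc k (a + (2 * k + 1)) = cyc k a :=
  Fin.ext (Nat.add_mod_right _ _)

lemma cyc_add_val (k a : ℕ) {i : ℕ} (hi : i < 2 * k + 1) :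
    (cyc k (a + i)).val = (cyc k a).val + i ∨
      (cyc k (a + i)).val + (2 * k + 1) = (cyc k a).val + i := by
  have := Nat.mod_lt a (by omega : 0 < 2 * k + 1)
  simp only [cyc_val, Nat.add_mod a i, Nat.mod_eq_of_lt hi]
  by_cases h : a % (2 * k + 1) + i < 2 * k + 1
  · exact .inl (Nat.mod_eq_of_lt h)
  · right
    rw [Nat.mod_eq_sub_mod (by omega), Nat.mod_eq_of_lt (by omega)]
    omega

lemma cyc_injOn (k a : ℕ) : Set.InjOn (fun i ↦ cyc k (a + i)) (Set.Iic (2 * k)) := by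
  intro i hi j hj hij
  rw [Set.mem_Iic] at hi hj
  have := Fin.val_eq_of_eq (show cyc k (a + i) = cyc k (a + j) from hij)
  rcases cyc_add_val k a (i := i) (by omega) with hi' | hi' <;>
    rcases cyc_add_val k a (i := j) (by omega) with hj' | hj' <;> omega

lemma ne_s_of_lt {w : Fin (2 * k + 3)} (hw : w.val < 2 * k + 1) : w ≠ s k :=
  Fin.ne_of_val_ne hw.ne

lemma cyc_ne_cyc_succ (hk : 0 < k) (i : ℕ) : cyc k i ≠ cyc k (i + 1) :=
  (cyc_injOn k i).ne (by simp) (by simp; omega) zero_ne_one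

lemma cCoeff_s_of_lt {w : Fin (2 * k + 3)} (hw : w.val < 2 * k + 1) : cCoeff k s(s k, w) = k := by
  show cCoeffFun k (2 * k + 1) w.val = k
  unfold cCoeffFun
  split_ifs <;> omega

lemma cCoeff_t_of_lt {w : Fin (2 * k + 3)} (hw : w.val < 2 * k + 1) : cCoeff k s(t k, w) = k := by
  show cCoeffFun k (2 * k + 2) w.val = k
  unfold cCoeffFun
  split_ifs <;> omega

lemma cCoeff_s_t : cCoeff k s(s k, t k) = 1 := by
  show cCoeffFun k (2 * k + 1) (2 * k + 2) = 1
  unfold cCoeffFun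
  split_ifs <;> omega

lemma cCoeff_cyc_succ (hk : 0 < k) (i : ℕ) : cCoeff k s(cyc k i, cyc k (i + 1)) = 1 := by
  have := cyc_val_lt k i
  have := cyc_val_lt k (i + 1)
  have := cyc_add_val k i (i := 1) (by omega)
  show cCoeffFun k (cyc k i).val (cyc k (i + 1)).val = 1
  unfold cCoeffFun ellLen
  split_ifs <;> omega

lemma cCoeff_cyc_add_even (a : ℕ) {m : ℕ} (hm : 2 ≤ m) (hmk : m ≤ 2 * k) (heven : Even m) :
    cCoeff k s(cyc k (a + m), cyc k a) = 2 * k + 1 - m := by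
  have := cyc_val_lt k a
  have := cyc_val_lt k (a + m)
  have := cyc_add_val k a (i := m) (by omega)
  have := Nat.even_iff.1 heven
  show cCoeffFun k (cyc k (a + m)).val (cyc k a).val = 2 * k + 1 - m
  unfold cCoeffFun ellLen
  split_ifs <;> omega

def tightOddCycles (k : ℕ) : Set (Finset (Sym2 (Fin (2 * k + 3)))) :=
  {F | ∃ (u : Fin (2 * k + 3)) (p : (⊤ : SimpleGraph (Fin (2 * k + 3))).Walk u u),
    p.IsCycle ∧ Odd p.length ∧ (p.edges.map (cCoeff k)).sum = 2 * k + 1 ∧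
    F = p.edges.toFinset}

abbrev QExpressible (k : ℕ) : Sym2 (Fin (2 * k + 3)) → Prop :=
  Expressible (tightOddCycles k) {e | ¬e.IsDiag ∧ s k ∈ e}

lemma QExpressible.of_mem_s {e : Sym2 (Fin (2 * k + 3))} (he : ¬e.IsDiag) (hs : s k ∈ e) :
    QExpressible k e :=
  .base ⟨he, hs⟩

lemma QExpressible.s_left {w : Fin (2 * k + 3)} (hw : w.val < 2 * k + 1) :
    QExpressible k s(s k, w) :=
  .of_mem_s (Sym2.mk_isDiag_iff.not.2 (ne_s_of_lt hw).symm) (Sym2.mem_mk_left _ _)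

lemma QExpressible.s_right {w : Fin (2 * k + 3)} (hw : w.val < 2 * k + 1) :
    QExpressible k s(w, s k) :=
  Sym2.eq_swap ▸ .s_left hw

lemma QExpressible.of_tight {u : Fin (2 * k + 3)}
    (p : (⊤ : SimpleGraph (Fin (2 * k + 3))).Walk u u)
    (hp : p.IsCycle) (hodd : Odd p.length) (htight : (p.edges.map (cCoeff k)).sum = 2 * k + 1)
    {e : Sym2 (Fin (2 * k + 3))} (he : e ∈ p.edges)
    (hrest : ∀ f ∈ p.edges, f ≠ e → QExpressible k f) : QExpressible k e :=
  .step _ e ⟨u, p, hp, hodd, htight, rfl⟩ (List.mem_toFinset.2 he)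
    fun f hf ↦ hrest f (List.mem_toFinset.1 hf)

lemma QExpressible.of_triangle {x y z : Fin (2 * k + 3)}
    (hxy : x ≠ y) (hyz : y ≠ z) (hzx : z ≠ x)
    (htight : cCoeff k s(x, y) + cCoeff k s(y, z) + cCoeff k s(z, x) = 2 * k + 1)
    (h₁ : QExpressible k s(x, y)) (h₂ : QExpressible k s(y, z)) : QExpressible k s(z, x) := by
  refine .of_tight _ (isCycle_triangle ((top_adj _ _).2 hxy) ((top_adj _ _).2 hyz)
    ((top_adj _ _).2 hzx)) ⟨1, rfl⟩ (by simpa [add_assoc] using htight) (by simp) ?_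
  simp only [Walk.edges_cons, Walk.edges_nil, List.mem_cons, List.not_mem_nil, or_false]
  rintro f (rfl | rfl | rfl) hne
  exacts [h₁, h₂, absurd rfl hne]

lemma qExpressible_cyc_succ (hk : 0 < k) (i : ℕ) :
    QExpressible k s(cyc k i, cyc k (i + 1)) := by
  refine .of_triangle (y := s k) (ne_s_of_lt (cyc_val_lt k _)) (ne_s_of_lt (cyc_val_lt k _)).symm
    (cyc_ne_cyc_succ hk i) ?_ (.s_right (cyc_val_lt k _)) (.s_left (cyc_val_lt k _))
  rw [Sym2.eq_swap, cCoeff_s_of_lt (cyc_val_lt k _), cCoeff_s_of_lt (cyc_val_lt k _),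
    cCoeff_cyc_succ hk]
  ring

lemma qExpressible_cyc_add_even (a : ℕ) {m : ℕ} (hm : 2 ≤ m) (hmk : m ≤ 2 * k)
    (heven : Even m) : QExpressible k s(cyc k (a + m), cyc k a) := by
  have hk : 0 < k := by omega
  have hinj : Set.InjOn (fun i ↦ cyc k (a + i)) (Set.Iic m) :=
    (cyc_injOn k a).mono (Set.Iic_subset_Iic.2 hmk)
  have hchord : (⊤ : SimpleGraph _).Adj (cyc k (a + m)) (cyc k a) :=
    (top_adj _ _).2 ((cyc_injOn k a).ne (by simpa using hmk) (by simp) (by omega : m ≠ 0))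
  let path := topWalkOfSeq (fun i ↦ cyc k (a + i)) (fun i ↦ cyc_ne_cyc_succ hk (a + i)) m
  have hedges : (Walk.cons hchord path).edges = s(cyc k (a + m), cyc k a) ::
      (List.range m).map fun i ↦ s(cyc k (a + i), cyc k (a + i + 1)) := by
    rw [Walk.edges_cons, edges_topWalkOfSeq]
    rfl
  refine .of_tight (Walk.cons hchord path) (isCycle_cons_topWalkOfSeq _ hm hinj hchord) ?_ ?_
    (by simp [hedges]) ?_
  · rw [Walk.length_cons, length_topWalkOfSeq]
    exact heven.add_one
  · simp [hedges, Function.comp_def, cCoeff_cyc_succ hk, cCoeff_cyc_add_even a hm hmk heven]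
    omega
  · intro f hf hne
    simp only [hedges, List.mem_cons, hne, false_or, List.mem_map] at hf
    obtain ⟨i, -, rfl⟩ := hf
    exact qExpressible_cyc_succ hk (a + i)

lemma qExpressible_cyc_of_lt {a b : ℕ} (hab : a < b) (hb : b < 2 * k + 1) :
    QExpressible k s(cyc k a, cyc k b) := by
  rcases Nat.even_or_odd (b - a) with heven | hodd
  · have h := qExpressible_cyc_add_even (k := k) a (m := b - a) (by grind) (by omega) heven
    rwa [Nat.add_sub_cancel' hab.le, Sym2.eq_swap] at h
  · have h := qExpressible_cyc_add_even (k := k) b (m := 2 * k + 1 - (b - a)) (by grind)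
      (by grind) (by grind)
    rwa [show b + (2 * k + 1 - (b - a)) = a + (2 * k + 1) by omega, cyc_add_period] at h

lemma qExpressible_t_of_lt {w : Fin (2 * k + 3)} (hw : w.val < 2 * k + 1) :
    QExpressible k s(t k, w) := by
  have hst : s k ≠ t k := Fin.ne_of_val_ne (by simp [s, t])
  have htw : t k ≠ w := Fin.ne_of_val_ne (by simp [t]; omega)
  refine .of_triangle (ne_s_of_lt hw) hst htw ?_ (.s_right hw)
    (.of_mem_s (Sym2.mk_isDiag_iff.not.2 hst) (Sym2.mem_mk_left _ _))
  rw [Sym2.eq_swap, cCoeff_s_of_lt hw, cCoeff_s_t, cCoeff_t_of_lt hw]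
  ring

theorem qExpressible {e : Sym2 (Fin (2 * k + 3))} (he : ¬e.IsDiag) : QExpressible k e := by
  induction e using Sym2.ind with
  | _ x y =>
  wlog hxy : x < y generalizing x y
  · rw [Sym2.eq_swap]
    exact this y x (by rwa [Sym2.eq_swap]) (lt_of_le_of_ne (not_lt.1 hxy) (Ne.symm he))
  rcases val_lt_or_eq_s_or_eq_t y with hy | rfl | rfl
  · have hx : x.val < 2 * k + 1 := (Fin.lt_def.1 hxy).trans hy
    simpa only [cyc_val_of_lt hx, cyc_val_of_lt hy] using qExpressible_cyc_of_lt (k := k) hxy hy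
  · exact .s_right hxy
  · rcases val_lt_or_eq_s_or_eq_t x with hx | rfl | rfl
    · exact Sym2.eq_swap ▸ qExpressible_t_of_lt hx
    · exact .of_mem_s he (Sym2.mem_mk_left _ _)
    · exact absurd hxy (lt_irrefl _)

end CInducedConstraint

/-- For `G = K_{2k+3}` with cycle `C` on vertices `0,…,2k` and remaining vertices
`s = 2k+1`, `t = 2k+2`, every edge of `G` is `Q`-expressible for `Q = δ(s)` with
respect to the odd cycles tight for the `C`-induced constraint. -/
theorem stmt_9 (k : ℕ) (e : Sym2 (Fin (2 * k + 3))) (he : ¬e.IsDiag) :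
    Expressible
      {F | ∃ (u : Fin (2 * k + 3)) (p : (⊤ : SimpleGraph (Fin (2 * k + 3))).Walk u u),
        p.IsCycle ∧ Odd p.length ∧ (p.edges.map (cCoeff k)).sum = 2 * k + 1 ∧
        F = p.edges.toFinset}
      {e' : Sym2 (Fin (2 * k + 3)) | ¬e'.IsDiag ∧ (⟨2 * k + 1, by omega⟩ : Fin (2 * k + 3)) ∈ e'}
      e :=
  CInducedConstraint.qExpressible he
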